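/- arXiv:2603.12405 — 2 statements merged into one kernel-verified Lean document; each statement's English description precedes it below -/
import Mathlib

section
/- The matrix U_n is unitary and satisfies (⟨0|⊗⟨0|⊗⟨0|⊗I_N) U_n (|0⟩⊗|0⟩⊗|0⟩⊗I_N) = L̃_n; that is, U_n is an exact (1, 3, 0)-block encoding of the scaled one-dimensional Neumann Laplacian L̃_n. -/
open Matrix
open scoped Kronecker

noncomputable section

instance instNeZeroPow2 (n : ℕ) : NeZero (2 ^ n) := ⟨pow_ne_zero n two_ne_zero⟩

/-- Cyclic left shift: `Sm • e_j = e_{j-1 mod N}`, i.e. `(Sm)_{i j} = [i = j - 1]`. -/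
def Sm (N : ℕ) [NeZero N] : Matrix (Fin N) (Fin N) ℂ :=
  Matrix.of fun i j => if i = j - 1 then 1 else 0

/-- Cyclic right shift: `Sp • e_j = e_{j+1 mod N}`. -/
def Sp (N : ℕ) [NeZero N] : Matrix (Fin N) (Fin N) ℂ :=
  Matrix.of fun i j => if i = j + 1 then 1 else 0

/-- The index `N - 1` of the last grid point. -/
def fLast (N : ℕ) [NeZero N] : Fin N := ⟨N - 1, Nat.sub_lt (Nat.pos_of_neZero N) Nat.one_pos⟩

def Hgate : Matrix (Fin 2) (Fin 2) ℂ := ((1 / Real.sqrt 2 : ℝ) : ℂ) • !![1, 1; 1, -1]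
def Zgate : Matrix (Fin 2) (Fin 2) ℂ := !![1, 0; 0, -1]
def Xgate : Matrix (Fin 2) (Fin 2) ℂ := !![0, 1; 1, 0]
def P0 : Matrix (Fin 2) (Fin 2) ℂ := !![1, 0; 0, 0]
def P1 : Matrix (Fin 2) (Fin 2) ℂ := !![0, 0; 0, 1]

/-- Controlled flip `F(Q) = X ⊗ Q + I₂ ⊗ (I − Q)` for a projector `Q`. -/
def Fctrl {α : Type*} [DecidableEq α] [Fintype α] (Q : Matrix α α ℂ) :
    Matrix (Fin 2 × α) (Fin 2 × α) ℂ :=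
  Xgate ⊗ₖ Q + (1 : Matrix (Fin 2) (Fin 2) ℂ) ⊗ₖ ((1 : Matrix α α ℂ) - Q)

/-- `C₋ = I₂ ⊗ (|0⟩⟨0| ⊗ I₂ ⊗ S⁻ + |1⟩⟨1| ⊗ I₂ ⊗ I_N)` on `del, ℓ₁, ℓ₀, j`. -/
def Cminus3 (N : ℕ) [NeZero N] :
    Matrix (Fin 2 × Fin 2 × Fin 2 × Fin N) (Fin 2 × Fin 2 × Fin 2 × Fin N) ℂ :=
  (1 : Matrix (Fin 2) (Fin 2) ℂ) ⊗ₖ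
    (P0 ⊗ₖ ((1 : Matrix (Fin 2) (Fin 2) ℂ) ⊗ₖ Sm N) +
     P1 ⊗ₖ ((1 : Matrix (Fin 2) (Fin 2) ℂ) ⊗ₖ (1 : Matrix (Fin N) (Fin N) ℂ)))

/-- `C₊ = I₂ ⊗ I₂ ⊗ (|1⟩⟨1| ⊗ S⁺ + |0⟩⟨0| ⊗ I_N)` on `del, ℓ₁, ℓ₀, j`. -/
def Cplus3 (N : ℕ) [NeZero N] :
    Matrix (Fin 2 × Fin 2 × Fin 2 × Fin N) (Fin 2 × Fin 2 × Fin 2 × Fin N) ℂ :=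
  (1 : Matrix (Fin 2) (Fin 2) ℂ) ⊗ₖ ((1 : Matrix (Fin 2) (Fin 2) ℂ) ⊗ₖ
    (P1 ⊗ₖ Sp N + P0 ⊗ₖ (1 : Matrix (Fin N) (Fin N) ℂ)))

/-- `B₀ = F(|0⟩⟨0| ⊗ |0⟩⟨0| ⊗ e₀e₀ᵀ)`. -/
def B00 (N : ℕ) [NeZero N] :
    Matrix (Fin 2 × Fin 2 × Fin 2 × Fin N) (Fin 2 × Fin 2 × Fin 2 × Fin N) ℂ :=
  Fctrl (P0 ⊗ₖ (P0 ⊗ₖ Matrix.single (0 : Fin N) (0 : Fin N) (1 : ℂ)))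

/-- `B₂ = F(|0⟩⟨0| ⊗ |1⟩⟨1| ⊗ e₀e₀ᵀ)`. -/
def B01 (N : ℕ) [NeZero N] :
    Matrix (Fin 2 × Fin 2 × Fin 2 × Fin N) (Fin 2 × Fin 2 × Fin 2 × Fin N) ℂ :=
  Fctrl (P0 ⊗ₖ (P1 ⊗ₖ Matrix.single (0 : Fin N) (0 : Fin N) (1 : ℂ)))

/-- `B_{N−1} = F(|1⟩⟨1| ⊗ |1⟩⟨1| ⊗ e_{N−1}e_{N−1}ᵀ)`. -/
def B11L (N : ℕ) [NeZero N] :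
    Matrix (Fin 2 × Fin 2 × Fin 2 × Fin N) (Fin 2 × Fin 2 × Fin 2 × Fin N) ℂ :=
  Fctrl (P1 ⊗ₖ (P1 ⊗ₖ Matrix.single (fLast N) (fLast N) (1 : ℂ)))

/-- `B₄ = F(|0⟩⟨0| ⊗ |1⟩⟨1| ⊗ e_{N−1}e_{N−1}ᵀ)`. -/
def B01L (N : ℕ) [NeZero N] :
    Matrix (Fin 2 × Fin 2 × Fin 2 × Fin N) (Fin 2 × Fin 2 × Fin 2 × Fin N) ℂ :=
  Fctrl (P0 ⊗ₖ (P1 ⊗ₖ Matrix.single (fLast N) (fLast N) (1 : ℂ)))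

/-- `I₂ ⊗ A ⊗ A ⊗ I_N` for a single-qubit gate `A`. -/
def sandwich (N : ℕ) [NeZero N] (A : Matrix (Fin 2) (Fin 2) ℂ) :
    Matrix (Fin 2 × Fin 2 × Fin 2 × Fin N) (Fin 2 × Fin 2 × Fin 2 × Fin N) ℂ :=
  (1 : Matrix (Fin 2) (Fin 2) ℂ) ⊗ₖ (A ⊗ₖ (A ⊗ₖ (1 : Matrix (Fin N) (Fin N) ℂ)))

/-- `U_d = (I₂⊗H⊗H⊗I) · C₊ · C₋ · B_{N−1} · B₀ · (I₂⊗Z⊗Z⊗I) · (I₂⊗H⊗H⊗I)`. -/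
def Ud (N : ℕ) [NeZero N] :
    Matrix (Fin 2 × Fin 2 × Fin 2 × Fin N) (Fin 2 × Fin 2 × Fin 2 × Fin N) ℂ :=
  sandwich N Hgate * Cplus3 N * Cminus3 N * B11L N * B00 N * sandwich N Zgate * sandwich N Hgate

/-- `U_n = (I₂⊗H⊗H⊗I) · C₊ · C₋ · B₄ · B₃ · B₂ · B₁ · (I₂⊗Z⊗Z⊗I) · (I₂⊗H⊗H⊗I)`. -/
def Un (N : ℕ) [NeZero N] :
    Matrix (Fin 2 × Fin 2 × Fin 2 × Fin N) (Fin 2 × Fin 2 × Fin 2 × Fin N) ℂ :=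
  sandwich N Hgate * Cplus3 N * Cminus3 N * B01L N * B11L N * B01 N * B00 N *
    sandwich N Zgate * sandwich N Hgate

/-- The scaled 1D periodic Laplacian `L̃_p = (1/4)(S⁻ + S⁺ − 2 I)`. -/
def Lper (N : ℕ) [NeZero N] : Matrix (Fin N) (Fin N) ℂ :=
  (1 / 4 : ℂ) • (Sm N + Sp N - (2 : ℂ) • (1 : Matrix (Fin N) (Fin N) ℂ))

/-- The scaled 1D Dirichlet Laplacian. -/
def Ldir (N : ℕ) [NeZero N] : Matrix (Fin N) (Fin N) ℂ :=
  Lper N - (1 / 4 : ℂ) •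
    (Matrix.single (0 : Fin N) (fLast N) (1 : ℂ) +
     Matrix.single (fLast N) (0 : Fin N) (1 : ℂ))

/-- The scaled 1D Neumann Laplacian. -/
def Lneu (N : ℕ) [NeZero N] : Matrix (Fin N) (Fin N) ℂ :=
  Ldir N + (1 / 4 : ℂ) •
    (Matrix.single (0 : Fin N) (0 : Fin N) (1 : ℂ) +
     Matrix.single (fLast N) (fLast N) (1 : ℂ))


/-!
Grouping the factors, `U_n = (I ⊗ H⊗H⊗I) (I ⊗ T) F(Q) (I ⊗ ZH⊗ZH⊗I)`. The two shifts combine to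
`C₊C₋ = I ⊗ T`, where `T = Σ_ℓ |ℓ⟩⟨ℓ| ⊗ T_ℓ` (`shiftSelect`) applies `S⁻, I, I, S⁺` for
`ℓ₁ℓ₀ = 00, 01, 10, 11`. The controls of the four flips are mutually orthogonal once
`e₀ ≠ e_{N-1}` (i.e. `N ≥ 2`), so the flips merge into a single flip `F(Q)` with
`Q = Σ_ℓ |ℓ⟩⟨ℓ| ⊗ Q_ℓ` (`boundaryProjector`). On `del = 0` the flip acts as `1 - Q`, and the
Hadamard layers turn the `|000⟩` corner into `¼ Σ_ℓ (-1)^(ℓ₀+ℓ₁) T_ℓ (1 - Q_ℓ)`: the projectors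
`Q_ℓ` cut off the wrap-around entries of the cyclic shifts and restore the Neumann diagonal at
both ends. Unitarity holds factor by factor, `F(Q)` being a self-adjoint involution for a
projector `Q`.
-/

namespace Matrix

variable {R l m n p : Type*}

theorem kronecker_sub [Ring R] (A : Matrix l m R) (B C : Matrix n p R) :
    A ⊗ₖ (B - C) = A ⊗ₖ B - A ⊗ₖ C := by
  ext ⟨i, i'⟩ ⟨j, j'⟩
  simp [mul_sub]

theorem submatrix_kronecker_prodMk [Mul R] (A : Matrix l m R) (B : Matrix n p R) (a : l) (b : m) :
    (A ⊗ₖ B).submatrix (Prod.mk a) (Prod.mk b) = A a b • B :=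
  rfl

theorem submatrix_kronecker_kronecker [Semigroup R] {q r : Type*} (A : Matrix l m R)
    (B : Matrix n p R) (M : Matrix q r R) (a : l) (b : m) (c : n) (d : p) :
    (A ⊗ₖ (B ⊗ₖ M)).submatrix (fun i => (a, c, i)) (fun j => (b, d, j)) = (A a b * B c d) • M := by
  ext i j
  simp [mul_assoc]

end Matrix

theorem IsStarProjection.kronecker {R m n : Type*} [CommSemiring R] [StarRing R] [Fintype m]
    [Fintype n] {A : Matrix m m R} {B : Matrix n n R} (hA : IsStarProjection A)
    (hB : IsStarProjection B) : IsStarProjection (A ⊗ₖ B) where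
  isIdempotentElem := by
    rw [IsIdempotentElem, ← mul_kronecker_mul, hA.isIdempotentElem.eq, hB.isIdempotentElem.eq]
  isSelfAdjoint := by
    rw [IsSelfAdjoint, star_eq_conjTranspose, conjTranspose_kronecker, ← star_eq_conjTranspose,
      ← star_eq_conjTranspose, hA.isSelfAdjoint.star_eq, hB.isSelfAdjoint.star_eq]

theorem isStarProjection_single_self {m : Type*} [Fintype m] [DecidableEq m] (k : m) :
    IsStarProjection (single k k (1 : ℂ)) :=
  ⟨by rw [IsIdempotentElem, single_mul_single_same, mul_one], by
    rw [IsSelfAdjoint, star_eq_conjTranspose, conjTranspose_single, star_one]⟩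

theorem inv_ofReal_sqrt_two_mul_self :
    ((Real.sqrt 2 : ℝ) : ℂ)⁻¹ * ((Real.sqrt 2 : ℝ) : ℂ)⁻¹ = 2⁻¹ := by
  rw [← mul_inv, ← Complex.ofReal_mul, Real.mul_self_sqrt zero_le_two, Complex.ofReal_ofNat]

theorem P0_mul_P0 : P0 * P0 = P0 := by
  ext i j; fin_cases i <;> fin_cases j <;> simp [P0, mul_apply]

theorem P0_mul_P1 : P0 * P1 = 0 := by
  ext i j; fin_cases i <;> fin_cases j <;> simp [P0, P1, mul_apply]

theorem P1_mul_P0 : P1 * P0 = 0 := by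
  ext i j; fin_cases i <;> fin_cases j <;> simp [P0, P1, mul_apply]

theorem P1_mul_P1 : P1 * P1 = P1 := by
  ext i j; fin_cases i <;> fin_cases j <;> simp [P1, mul_apply]

theorem P0_add_P1 : P0 + P1 = 1 := by
  ext i j; fin_cases i <;> fin_cases j <;> simp [P0, P1]

theorem isStarProjection_P0 : IsStarProjection P0 :=
  ⟨P0_mul_P0, by ext i j; fin_cases i <;> fin_cases j <;> simp [P0]⟩

theorem isStarProjection_P1 : IsStarProjection P1 :=
  ⟨P1_mul_P1, by ext i j; fin_cases i <;> fin_cases j <;> simp [P1]⟩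

theorem Xgate_mul_Xgate : Xgate * Xgate = 1 := by
  ext i j; fin_cases i <;> fin_cases j <;> simp [Xgate, mul_apply]

theorem conjTranspose_Xgate : Xgateᴴ = Xgate := by
  ext i j; fin_cases i <;> fin_cases j <;> simp [Xgate]

theorem Zgate_mem_unitaryGroup : Zgate ∈ unitaryGroup (Fin 2) ℂ := by
  rw [mem_unitaryGroup_iff]
  ext i j; fin_cases i <;> fin_cases j <;> simp [Zgate, mul_apply]

theorem Hgate_mem_unitaryGroup : Hgate ∈ unitaryGroup (Fin 2) ℂ := by
  rw [mem_unitaryGroup_iff]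
  ext i j
  fin_cases i <;> fin_cases j <;>
    simp [Hgate, mul_apply, inv_ofReal_sqrt_two_mul_self, ← two_mul]

theorem Hgate_mul_P0_mul_Zgate_mul_Hgate_apply_zero_zero :
    (Hgate * P0 * (Zgate * Hgate)) 0 0 = 1 / 2 := by
  simp [Hgate, P0, Zgate, mul_apply, inv_ofReal_sqrt_two_mul_self]

theorem Hgate_mul_P1_mul_Zgate_mul_Hgate_apply_zero_zero :
    (Hgate * P1 * (Zgate * Hgate)) 0 0 = -(1 / 2) := by
  simp [Hgate, P1, Zgate, mul_apply, inv_ofReal_sqrt_two_mul_self]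

section Shift

variable (N : ℕ) [NeZero N]

theorem fLast_ne_zero (hN : 2 ≤ N) : fLast N ≠ 0 := by
  intro h
  have := congrArg Fin.val h
  simp only [fLast, Fin.val_zero] at this
  omega

theorem fLast_add_one : fLast N + 1 = 0 := by
  ext
  simp [fLast, Fin.val_add, Nat.sub_add_cancel NeZero.one_le]

theorem neg_one_eq_fLast : (-1 : Fin N) = fLast N :=
  neg_eq_of_add_eq_zero_left (fLast_add_one N)

theorem Sp_mul_Sm : Sp N * Sm N = 1 := by
  ext i j
  simp only [Sp, Sm, mul_apply, of_apply, mul_ite, mul_one, mul_zero, Finset.sum_ite_eq',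
    Finset.mem_univ, if_true, sub_add_cancel, one_apply]

theorem Sm_mul_Sp : Sm N * Sp N = 1 :=
  mul_eq_one_comm.mp (Sp_mul_Sm N)

theorem star_Sm : star (Sm N) = Sp N := by
  ext i j
  simp only [Sp, Sm, star_apply, of_apply, eq_sub_iff_add_eq, eq_comm]
  split_ifs <;> simp

theorem Sm_mem_unitaryGroup : Sm N ∈ unitaryGroup (Fin N) ℂ := by
  rw [mem_unitaryGroup_iff, star_Sm, Sm_mul_Sp]

theorem Sp_mem_unitaryGroup : Sp N ∈ unitaryGroup (Fin N) ℂ := by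
  rw [mem_unitaryGroup_iff, ← star_Sm, star_star, star_Sm, Sp_mul_Sm]

theorem Sm_mul_single_zero : Sm N * single 0 0 1 = single (fLast N) 0 1 := by
  ext i j
  by_cases hj : j = 0
  · subst hj
    simp [Sm, single_apply, neg_one_eq_fLast, eq_comm]
  · simp [hj, Ne.symm hj]

theorem Sp_mul_single_fLast : Sp N * single (fLast N) (fLast N) 1 = single 0 (fLast N) 1 := by
  ext i j
  by_cases hj : j = fLast N
  · subst hj
    simp [Sp, single_apply, fLast_add_one, eq_comm]
  · simp [hj, Ne.symm hj]

end Shift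

section Controlled

variable {α : Type*} [DecidableEq α] [Fintype α]

theorem P0_kronecker_add_P1_kronecker_mem_unitaryGroup {U V : Matrix α α ℂ}
    (hU : U ∈ unitaryGroup α ℂ) (hV : V ∈ unitaryGroup α ℂ) :
    P0 ⊗ₖ U + P1 ⊗ₖ V ∈ unitaryGroup (Fin 2 × α) ℂ := by
  have hP0 : P0ᴴ = P0 := isStarProjection_P0.isSelfAdjoint.star_eq
  have hP1 : P1ᴴ = P1 := isStarProjection_P1.isSelfAdjoint.star_eq
  rw [mem_unitaryGroup_iff, star_eq_conjTranspose] at *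
  simp only [conjTranspose_add, conjTranspose_kronecker, hP0, hP1, add_mul, mul_add,
    ← mul_kronecker_mul, P0_mul_P0, P0_mul_P1, P1_mul_P0, P1_mul_P1, hU, hV, zero_kronecker,
    add_zero, zero_add]
  rw [← add_kronecker, P0_add_P1, one_kronecker_one]

theorem Fctrl_mem_unitaryGroup {Q : Matrix α α ℂ} (hQ : IsStarProjection Q) :
    Fctrl Q ∈ unitaryGroup (Fin 2 × α) ℂ := by
  have hQ' : Qᴴ = Q := hQ.isSelfAdjoint.star_eq
  rw [mem_unitaryGroup_iff, star_eq_conjTranspose]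
  simp only [Fctrl, conjTranspose_add, conjTranspose_kronecker, conjTranspose_sub,
    conjTranspose_one, conjTranspose_Xgate, hQ', add_mul, mul_add, ← mul_kronecker_mul,
    Xgate_mul_Xgate, one_mul, hQ.isIdempotentElem.eq, hQ.mul_one_sub_self,
    hQ.one_sub_mul_self, hQ.one_sub.isIdempotentElem.eq, kronecker_zero, add_zero, zero_add]
  rw [← kronecker_add, add_sub_cancel, one_kronecker_one]

theorem Fctrl_mul_Fctrl {Q Q' : Matrix α α ℂ} (h : Q * Q' = 0) :
    Fctrl Q * Fctrl Q' = Fctrl (Q + Q') := by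
  have hQ : Q * (1 - Q') = Q := by rw [mul_sub, mul_one, h, sub_zero]
  have hQ' : (1 - Q) * Q' = Q' := by rw [sub_mul, one_mul, h, sub_zero]
  have hcompl : (1 - Q) * (1 - Q') = 1 - (Q + Q') := by rw [sub_mul, one_mul, hQ]; abel
  simp only [Fctrl, add_mul, mul_add, ← mul_kronecker_mul, Xgate_mul_Xgate, one_mul, mul_one,
    h, hQ, hQ', hcompl, kronecker_zero, zero_add, kronecker_add]
  abel

theorem submatrix_one_kronecker_mul_Fctrl_mul (A T B Q : Matrix α α ℂ) :
    (((1 : Matrix (Fin 2) (Fin 2) ℂ) ⊗ₖ A) * ((1 : Matrix (Fin 2) (Fin 2) ℂ) ⊗ₖ T) * Fctrl Q *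
        ((1 : Matrix (Fin 2) (Fin 2) ℂ) ⊗ₖ B)).submatrix (Prod.mk 0) (Prod.mk 0) =
      A * T * (1 - Q) * B := by
  simp only [Fctrl, mul_add, add_mul, ← mul_kronecker_mul, one_mul, mul_one, submatrix_add,
    Pi.add_apply, submatrix_kronecker_prodMk]
  simp [Xgate]

end Controlled

section Circuit

variable (N : ℕ) [NeZero N]

theorem sandwich_mem_unitaryGroup {A : Matrix (Fin 2) (Fin 2) ℂ}
    (hA : A ∈ unitaryGroup (Fin 2) ℂ) :
    sandwich N A ∈ unitaryGroup (Fin 2 × Fin 2 × Fin 2 × Fin N) ℂ :=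
  kronecker_mem_unitary (one_mem _) <|
    kronecker_mem_unitary hA (kronecker_mem_unitary hA (one_mem _))

theorem Cminus3_mem_unitaryGroup : Cminus3 N ∈ unitaryGroup (Fin 2 × Fin 2 × Fin 2 × Fin N) ℂ :=
  kronecker_mem_unitary (one_mem _) <| P0_kronecker_add_P1_kronecker_mem_unitaryGroup
    (kronecker_mem_unitary (one_mem _) (Sm_mem_unitaryGroup N))
    (kronecker_mem_unitary (one_mem _) (one_mem _))

theorem Cplus3_mem_unitaryGroup : Cplus3 N ∈ unitaryGroup (Fin 2 × Fin 2 × Fin 2 × Fin N) ℂ := by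
  rw [Cplus3, add_comm (P1 ⊗ₖ _)]
  exact kronecker_mem_unitary (one_mem _) <| kronecker_mem_unitary (one_mem _) <|
    P0_kronecker_add_P1_kronecker_mem_unitaryGroup (one_mem _) (Sp_mem_unitaryGroup N)

theorem Un_mem_unitaryGroup : Un N ∈ unitaryGroup (Fin 2 × Fin 2 × Fin 2 × Fin N) ℂ := by
  have hH := sandwich_mem_unitaryGroup N Hgate_mem_unitaryGroup
  have hZ := sandwich_mem_unitaryGroup N Zgate_mem_unitaryGroup
  have hflip {A B : Matrix (Fin 2) (Fin 2) ℂ} (hA : IsStarProjection A) (hB : IsStarProjection B)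
      (k : Fin N) : Fctrl (A ⊗ₖ (B ⊗ₖ single k k (1 : ℂ))) ∈ unitaryGroup _ ℂ :=
    Fctrl_mem_unitaryGroup (hA.kronecker (hB.kronecker (isStarProjection_single_self k)))
  have hP0 := isStarProjection_P0
  have hP1 := isStarProjection_P1
  exact mul_mem (mul_mem (mul_mem (mul_mem (mul_mem (mul_mem (mul_mem (mul_mem hH
    (Cplus3_mem_unitaryGroup N)) (Cminus3_mem_unitaryGroup N)) (hflip hP0 hP1 _))
    (hflip hP1 hP1 _)) (hflip hP0 hP1 _)) (hflip hP0 hP0 _)) hZ) hH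

def shiftSelect : Matrix (Fin 2 × Fin 2 × Fin N) (Fin 2 × Fin 2 × Fin N) ℂ :=
  P0 ⊗ₖ (P0 ⊗ₖ Sm N) + P0 ⊗ₖ (P1 ⊗ₖ 1) + P1 ⊗ₖ (P0 ⊗ₖ 1) + P1 ⊗ₖ (P1 ⊗ₖ Sp N)

def boundaryProjector : Matrix (Fin 2 × Fin 2 × Fin N) (Fin 2 × Fin 2 × Fin N) ℂ :=
  P0 ⊗ₖ (P0 ⊗ₖ single 0 0 1) + P0 ⊗ₖ (P1 ⊗ₖ (single 0 0 1 + single (fLast N) (fLast N) 1)) +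
    P1 ⊗ₖ (P1 ⊗ₖ single (fLast N) (fLast N) 1)

theorem Cplus3_mul_Cminus3 : Cplus3 N * Cminus3 N = 1 ⊗ₖ shiftSelect N := by
  simp only [Cplus3, Cminus3, shiftSelect, mul_add, add_mul, ← mul_kronecker_mul, one_mul,
    mul_one, Sp_mul_Sm, kronecker_add]
  abel

theorem B01L_mul_B11L_mul_B01_mul_B00 (hN : fLast N ≠ 0) :
    B01L N * B11L N * B01 N * B00 N = Fctrl (boundaryProjector N) := by
  have hL0 : single (fLast N) (fLast N) (1 : ℂ) * single 0 0 1 = 0 :=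
    single_mul_single_of_ne 1 (fLast N) (fLast N) 0 hN 1
  unfold B01L B11L B01 B00
  rw [Fctrl_mul_Fctrl, Fctrl_mul_Fctrl, Fctrl_mul_Fctrl]
  · congr 1
    simp only [boundaryProjector, kronecker_add]
    abel
  all_goals
    simp only [add_mul, ← mul_kronecker_mul, P0_mul_P0, P0_mul_P1, P1_mul_P0, P1_mul_P1,
      single_mul_single_same, mul_one, hL0, zero_kronecker, kronecker_zero, add_zero]

theorem shiftSelect_mul_one_sub_boundaryProjector :
    shiftSelect N * (1 - boundaryProjector N) =
      P0 ⊗ₖ (P0 ⊗ₖ (Sm N - single (fLast N) 0 1)) +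
      P0 ⊗ₖ (P1 ⊗ₖ (1 - single 0 0 1 - single (fLast N) (fLast N) 1)) +
      P1 ⊗ₖ (P0 ⊗ₖ 1) + P1 ⊗ₖ (P1 ⊗ₖ (Sp N - single 0 (fLast N) 1)) := by
  simp only [shiftSelect, boundaryProjector, mul_sub, mul_one, mul_add, add_mul,
    ← mul_kronecker_mul, one_mul, P0_mul_P0, P0_mul_P1, P1_mul_P0, P1_mul_P1,
    Sm_mul_single_zero, Sp_mul_single_fLast, zero_kronecker, kronecker_zero, add_zero, zero_add,
    kronecker_sub, kronecker_add]
  abel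

theorem Un_eq (hN : fLast N ≠ 0) :
    Un N = (1 ⊗ₖ (Hgate ⊗ₖ (Hgate ⊗ₖ 1))) * (1 ⊗ₖ shiftSelect N) * Fctrl (boundaryProjector N) *
      (1 ⊗ₖ ((Zgate * Hgate) ⊗ₖ ((Zgate * Hgate) ⊗ₖ 1))) := by
  rw [← Cplus3_mul_Cminus3, ← B01L_mul_B11L_mul_B01_mul_B00 N hN]
  simp only [Un, sandwich, mul_assoc, ← mul_kronecker_mul, one_mul]

theorem Un_submatrix_eq_Lneu (hN : fLast N ≠ 0) :
    (Un N).submatrix (fun i => ((0 : Fin 2), (0 : Fin 2), (0 : Fin 2), i))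
      (fun j => ((0 : Fin 2), (0 : Fin 2), (0 : Fin 2), j)) = Lneu N := by
  change (((Un N).submatrix (Prod.mk 0) (Prod.mk 0)).submatrix (fun i => (0, 0, i))
    (fun j => (0, 0, j))) = _
  rw [Un_eq N hN, submatrix_one_kronecker_mul_Fctrl_mul, mul_assoc (Hgate ⊗ₖ _),
    shiftSelect_mul_one_sub_boundaryProjector]
  simp only [mul_add, add_mul, ← mul_kronecker_mul, one_mul, mul_one, submatrix_add, Pi.add_apply,
    submatrix_kronecker_kronecker, Hgate_mul_P0_mul_Zgate_mul_Hgate_apply_zero_zero,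
    Hgate_mul_P1_mul_Zgate_mul_Hgate_apply_zero_zero]
  unfold Lneu Ldir Lper
  module

end Circuit

/-- `U_n` is unitary and is an exact (1,3,0)-block encoding of the scaled 1D Neumann
Laplacian: `(⟨0|⊗⟨0|⊗⟨0|⊗I) U_n (|0⟩⊗|0⟩⊗|0⟩⊗I) = L̃_n`. -/
theorem un_block_encodes_neumann_laplacian (n : ℕ) (hn : 1 ≤ n) :
    Un (2 ^ n) ∈ Matrix.unitaryGroup (Fin 2 × Fin 2 × Fin 2 × Fin (2 ^ n)) ℂ ∧
    (Un (2 ^ n)).submatrix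
        (fun i : Fin (2 ^ n) => ((0 : Fin 2), (0 : Fin 2), (0 : Fin 2), i))
        (fun j : Fin (2 ^ n) => ((0 : Fin 2), (0 : Fin 2), (0 : Fin 2), j))
      = Lneu (2 ^ n) := by
  have hN : fLast (2 ^ n) ≠ 0 := fLast_ne_zero _ (Nat.one_lt_two_pow (by omega))
  exact ⟨Un_mem_unitaryGroup _, Un_submatrix_eq_Lneu _ hN⟩
end
end

section
/- For every j with 1 ≤ j ≤ N−2, the unitary U_n satisfies (⟨0|⊗⟨0|⊗⟨0|⊗I_N) U_n (|0⟩⊗|0⟩⊗|0⟩⊗e_j) = (1/4)(e_{j−1} − 2 e_j + e_{j+1}). -/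
open Matrix
open scoped Kronecker

noncomputable section

/-- The standard basis vector `e_i` of `ℂ^N`. -/
def eVec (N : ℕ) (i : Fin N) : Fin N → ℂ := Pi.single i 1

/-! The basis state `|0,0,0,j⟩` is followed through the circuit. The first Hadamards spread it
uniformly over the ancilla states `|0,a,b⟩`, the `Z` gates attach the sign `(-1)^(a+b)`, the
boundary flips act trivially away from the endpoints `0` and `N - 1`, and `C₋`, `C₊` move the
walker to `j - [a = 0] + [b = 1]`. The last Hadamards give every branch the amplitude `1/2` on
`⟨0,0,0|`, so the four branches contribute `e_{j-1}`, `-e_j`, `-e_j` and `e_{j+1}`, each with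
weight `1/4`. -/

def ket (N : ℕ) (d a b : Fin 2) (k : Fin N) : Fin 2 × Fin 2 × Fin 2 × Fin N → ℂ :=
  Pi.single (d, a, b, k) 1

theorem ofReal_one_div_sqrt_two_mul_self :
    ((1 / Real.sqrt 2 : ℝ) : ℂ) * ((1 / Real.sqrt 2 : ℝ) : ℂ) = 1 / 2 := by
  rw [← Complex.ofReal_mul, div_mul_div_comm, Real.mul_self_sqrt zero_le_two]
  norm_num

theorem Hgate_apply_zero_mul_apply_zero (a b : Fin 2) : Hgate 0 a * Hgate 0 b = 1 / 2 := by
  fin_cases a <;> fin_cases b <;> simpa [Hgate] using ofReal_one_div_sqrt_two_mul_self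

theorem Hgate_apply_mul_apply_zero (a b : Fin 2) : Hgate a 0 * Hgate b 0 = 1 / 2 := by
  fin_cases a <;> fin_cases b <;> simpa [Hgate] using ofReal_one_div_sqrt_two_mul_self

theorem Fctrl_mulVec_single_of_col_eq_zero {α : Type*} [DecidableEq α] [Fintype α]
    (Q : Matrix α α ℂ) (d : Fin 2) (q : α) (hq : ∀ r, Q r q = 0) :
    Fctrl Q *ᵥ Pi.single (d, q) 1 = Pi.single (d, q) 1 := by
  ext ⟨d', q'⟩
  rw [mulVec_single_one, col_apply]
  simp only [Fctrl, Matrix.add_apply, kroneckerMap_apply, Matrix.sub_apply, hq, mul_zero,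
    sub_zero, zero_add, one_apply, Pi.single_apply, Prod.mk.injEq, ite_and]
  split_ifs <;> simp_all

theorem Fctrl_kronecker_single_mulVec_ket {N : ℕ} (P P' : Matrix (Fin 2) (Fin 2) ℂ)
    (c : Fin N) (d a b : Fin 2) {k : Fin N} (hk : k ≠ c) :
    Fctrl (P ⊗ₖ (P' ⊗ₖ single c c 1)) *ᵥ ket N d a b k = ket N d a b k :=
  Fctrl_mulVec_single_of_col_eq_zero _ _ _ fun _ => by simp [hk.symm]

section Circuit

variable {N : ℕ} [NeZero N]

theorem sandwich_mulVec_ket (A : Matrix (Fin 2) (Fin 2) ℂ) (d a b : Fin 2) (k : Fin N) :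
    sandwich N A *ᵥ ket N d a b k = ∑ a', ∑ b', (A a' a * A b' b) • ket N d a' b' k := by
  ext ⟨d', a', b', k'⟩
  simp only [ket, mulVec_single, sandwich, mul_one, Finset.sum_apply, Pi.smul_apply,
    Pi.single_apply, Prod.mk.injEq, smul_eq_mul, mul_ite]
  fin_cases a' <;> fin_cases b' <;> by_cases hd : d' = d <;> by_cases hk : k' = k <;>
    simp [hd, hk, Fin.sum_univ_two]

theorem sandwich_Hgate_mulVec_ket_zero (d : Fin 2) (k : Fin N) :
    sandwich N Hgate *ᵥ ket N d 0 0 k = (1 / 2 : ℂ) • ∑ a, ∑ b, ket N d a b k := by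
  simp only [sandwich_mulVec_ket, Hgate_apply_mul_apply_zero, Finset.smul_sum]

theorem sandwich_Hgate_mulVec_ket_apply_zero (d a b : Fin 2) (k i : Fin N) :
    (sandwich N Hgate *ᵥ ket N d a b k) (d, 0, 0, i) = 1 / 2 * eVec N k i := by
  rw [ket, mulVec_single_one, col_apply]
  simp [sandwich, one_apply, Hgate_apply_zero_mul_apply_zero, eVec, Pi.single_apply]

theorem sandwich_Zgate_mulVec_ket (d a b : Fin 2) (k : Fin N) :
    sandwich N Zgate *ᵥ ket N d a b k = ((-1) ^ (a.val + b.val) : ℂ) • ket N d a b k := by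
  rw [sandwich_mulVec_ket]
  fin_cases a <;> fin_cases b <;> simp [Zgate, Fin.sum_univ_two]

theorem boundary_gates_mulVec_ket (d a b : Fin 2) {k : Fin N} (hk0 : k ≠ 0)
    (hkL : k ≠ fLast N) :
    B01L N *ᵥ (B11L N *ᵥ (B01 N *ᵥ (B00 N *ᵥ ket N d a b k))) = ket N d a b k := by
  simp only [B00, B01, B11L, B01L, Fctrl_kronecker_single_mulVec_ket _ _ _ _ _ _ hk0,
    Fctrl_kronecker_single_mulVec_ket _ _ _ _ _ _ hkL]

theorem Cminus3_mulVec_ket (d a b : Fin 2) (k : Fin N) :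
    Cminus3 N *ᵥ ket N d a b k = ket N d a b (if a = 0 then k - 1 else k) := by
  ext ⟨d', a', b', k'⟩
  rw [ket, mulVec_single_one, col_apply]
  fin_cases a <;> fin_cases a' <;> simp [Cminus3, Sm, P0, P1, ket, one_apply, Pi.single_apply] <;>
    split_ifs <;> simp_all

theorem Cplus3_mulVec_ket (d a b : Fin 2) (k : Fin N) :
    Cplus3 N *ᵥ ket N d a b k = ket N d a b (if b = 1 then k + 1 else k) := by
  ext ⟨d', a', b', k'⟩
  rw [ket, mulVec_single_one, col_apply]
  fin_cases b <;> fin_cases b' <;> simp [Cplus3, Sp, P0, P1, ket, one_apply, Pi.single_apply] <;>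
    split_ifs <;> simp_all

theorem Un_apply_zero_of_ne {k : Fin N} (hk0 : k ≠ 0) (hkL : k ≠ fLast N) :
    (fun i : Fin N => Un N (0, 0, 0, i) (0, 0, 0, k)) =
      (1 / 4 : ℂ) • (eVec N (k - 1) - (2 : ℂ) • eVec N k + eVec N (k + 1)) := by
  have hstate : Cplus3 N *ᵥ (Cminus3 N *ᵥ (B01L N *ᵥ (B11L N *ᵥ (B01 N *ᵥ (B00 N *ᵥ
      (sandwich N Zgate *ᵥ (sandwich N Hgate *ᵥ ket N 0 0 0 k))))))) =
      (1 / 2 : ℂ) • ∑ a, ∑ b, ((-1) ^ (a.val + b.val) : ℂ) • ket N 0 a b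
        (if b = 1 then (if a = 0 then k - 1 else k) + 1 else if a = 0 then k - 1 else k) := by
    simp only [sandwich_Hgate_mulVec_ket_zero, mulVec_smul, mulVec_sum, sandwich_Zgate_mulVec_ket,
      boundary_gates_mulVec_ket _ _ _ hk0 hkL, Cminus3_mulVec_ket, Cplus3_mulVec_ket]
  ext i
  have hcol : Un N (0, 0, 0, i) (0, 0, 0, k) = (Un N *ᵥ ket N 0 0 0 k) (0, 0, 0, i) := by
    rw [ket, mulVec_single_one, col_apply]
  rw [hcol, Un]
  simp only [← mulVec_mulVec]
  rw [hstate]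
  simp only [mulVec_smul, mulVec_sum, Pi.smul_apply, Finset.sum_apply,
    sandwich_Hgate_mulVec_ket_apply_zero]
  simp [Fin.sum_univ_two]
  ring

end Circuit

/-- For interior points `1 ≤ j ≤ N−2`,
`(⟨0|⊗⟨0|⊗⟨0|⊗I) U_n (|0⟩⊗|0⟩⊗|0⟩⊗e_j) = (1/4)(e_{j−1} − 2e_j + e_{j+1})`. -/
theorem un_interior_action (n : ℕ) (j : ℕ) (hj1 : 1 ≤ j) (hj2 : j ≤ 2 ^ n - 2) :
    (fun i : Fin (2 ^ n) =>
        Un (2 ^ n) ((0 : Fin 2), (0 : Fin 2), (0 : Fin 2), i)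
          ((0 : Fin 2), (0 : Fin 2), (0 : Fin 2), (⟨j, by omega⟩ : Fin (2 ^ n))))
      = (1 / 4 : ℂ) •
          (eVec (2 ^ n) ⟨j - 1, by omega⟩
            - (2 : ℂ) • eVec (2 ^ n) ⟨j, by omega⟩
            + eVec (2 ^ n) ⟨j + 1, by omega⟩) := by
  set k : Fin (2 ^ n) := ⟨j, by omega⟩
  have hk0 : k ≠ 0 :=
    Fin.ne_of_val_ne (by simp only [Fin.coe_ofNat_eq_mod, Nat.zero_mod, k]; omega)
  have hkL : k ≠ fLast (2 ^ n) := Fin.ne_of_val_ne (show j ≠ 2 ^ n - 1 by omega)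
  have hpred : k - 1 = ⟨j - 1, by omega⟩ := Fin.ext (Fin.val_sub_one_of_ne_zero hk0)
  have hsucc : k + 1 = ⟨j + 1, by omega⟩ :=
    Fin.ext (Fin.val_add_one_of_lt' (show j + 1 < 2 ^ n by omega))
  rw [Un_apply_zero_of_ne hk0 hkL, hpred, hsucc]
end
end
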